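/- For every natural number n ≥ 1 and every real x, U_n(x) + Σ_{k=1}^{n} ((−1)^k / k!) · Σ_{i=0}^{⌊(n−k)/2⌋} (n−k−2i+1) · (n−i)^{\underline{k−1}} · C(k+i−1, k−1) · U_{n−k−2i}(x) · (2x)^k = cos(πn/2). -/

import Mathlib

/-!
Taylor's formula for `U_n` at `x`, evaluated at `0`, reads
`U_n(0) = ∑_k U_n^{(k)}(x) (-x)^k / k!`, and `U_n(0) = cos(πn/2)`. So the identity reduces to
the closed form
`U_n^{(k)} = 2^k ∑_i (n-k-2i+1) (n-i)^{\underline{k-1}} C(k+i-1, k-1) U_{n-k-2i}`, `1 ≤ k ≤ n`.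
For `k = 1` it is `U_n' = 2 ∑_i (n-2i) U_{n-1-2i}`, which telescopes `U_m = 2 T_m + U_{m-2}` and
`T_m' = m U_{m-1}`. Differentiating the closed form once more with this formula gives a triangular
double sum, and the coefficients collected in front of each `U_{n-k-1-2l}` add up by a
hockey-stick identity for falling factorials times binomial coefficients.
-/

open Polynomial Polynomial.Chebyshev

/-- The falling factorial a(a-1)⋯(a-m+1). -/
noncomputable def fallFac (a : ℝ) (m : ℕ) : ℝ := ∏ j ∈ Finset.range m, (a - j)

open Finset

theorem fallFac_succ (a : ℝ) (m : ℕ) : fallFac a (m + 1) = fallFac a m * (a - m) :=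
  prod_range_succ _ m

theorem fallFac_succ' (a : ℝ) (m : ℕ) : fallFac a (m + 1) = a * fallFac (a - 1) m := by
  simp only [fallFac, prod_range_succ', Nat.cast_zero, sub_zero, Nat.cast_succ,
    sub_add_eq_sub_sub_swap]
  ring

theorem sum_range_mul_fallFac_mul_choose (a : ℝ) (k m : ℕ) :
    ∑ i ∈ range (m + 1), (a - k - 2 * i) * fallFac (a - i) k * ((k + i).choose k : ℝ) =
      fallFac (a - m) (k + 1) * ((k + 1 + m).choose (k + 1) : ℝ) := by
  induction m with
  | zero =>
    rw [sum_range_one, fallFac_succ]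
    simp only [Nat.cast_zero, mul_zero, sub_zero, add_zero, Nat.choose_self, Nat.cast_one, mul_one]
    ring
  | succ m ih =>
    have hPascal : ((k + 1 + (m + 1)).choose (k + 1) : ℝ) =
        (k + m + 1).choose (k + 1) + (k + m + 1).choose k := by
      rw [show k + 1 + (m + 1) = k + m + 1 + 1 by omega, Nat.choose_succ_succ',
        Nat.cast_add, add_comm]
    have hAbsorb :
        ((k + m + 1).choose (k + 1) : ℝ) * (k + 1) = (k + m + 1).choose k * (m + 1) := by
      have h := Nat.choose_succ_right_eq (k + m + 1) k
      rw [show k + m + 1 - k = m + 1 by omega] at h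
      exact_mod_cast h
    rw [sum_range_succ, ih, fallFac_succ', fallFac_succ, hPascal,
      show k + 1 + m = k + m + 1 by omega, show k + (m + 1) = k + m + 1 by omega]
    push_cast
    rw [show a - m - 1 = a - (m + 1) by ring]
    linear_combination fallFac (a - (m + 1)) k * hAbsorb

theorem eval_eq_sum_range_iterate_derivative {K : Type*} [Field K] [CharZero K] {p : K[X]} {n : ℕ}
    (hp : p.natDegree ≤ n) (x y : K) :
    p.eval y = ∑ k ∈ range (n + 1), (derivative^[k] p).eval x / k.factorial * (y - x) ^ k := by
  rw [← taylor_eval_sub (r := x),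
    eval_eq_sum_range' (n := n + 1) (by rw [natDegree_taylor]; omega)]
  refine sum_congr rfl fun k _ => ?_
  rw [taylor_coeff, ← factorial_smul_hasseDeriv, LinearMap.smul_apply, eval_smul, nsmul_eq_mul,
    mul_div_cancel_left₀ _ (Nat.cast_ne_zero.mpr k.factorial_ne_zero)]

section
variable {R : Type*} [CommRing R]

theorem derivative_U_add_two (n : ℤ) :
    derivative (U R (n + 2)) = 2 * ((n : R[X]) + 2) * U R (n + 1) + derivative (U R n) := by
  rw [U_eq_two_mul_T_add_U, derivative_add, derivative_mul, T_derivative_eq_U,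
    show n + 2 - 1 = n + 1 by ring]
  simp only [derivative_ofNat, zero_mul, zero_add, Int.cast_add, Int.cast_ofNat]
  ring

theorem derivative_U_natCast (n : ℕ) :
    derivative (U R n) =
      ∑ i ∈ range ((n + 1) / 2), 2 * ((n : R[X]) - 2 * i) * U R (n - 1 - 2 * i : ℕ) := by
  induction n using Nat.twoStepInduction with
  | zero => simp
  | one => simp
  | more n ih _ =>
    have hshift (i : ℕ) : 2 * (((n + 2 : ℕ) : R[X]) - 2 * (i + 1 : ℕ)) *
        U R (n + 2 - 1 - 2 * (i + 1) : ℕ) =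
          2 * ((n : R[X]) - 2 * i) * U R (n - 1 - 2 * i : ℕ) := by
      rw [show n + 2 - 1 - 2 * (i + 1) = n - 1 - 2 * i by omega]
      push_cast; ring
    rw [show (n + 2 + 1) / 2 = (n + 1) / 2 + 1 by omega, sum_range_succ',
      sum_congr rfl fun i _ => hshift i, ← ih, show n + 2 - 1 - 2 * 0 = n + 1 by omega]
    push_cast
    rw [derivative_U_add_two, Int.cast_natCast]
    ring
end

noncomputable def scaledIterDerivU (n k : ℕ) : ℝ[X] :=
  ∑ i ∈ range ((n - k) / 2 + 1),
    C (((n : ℝ) - k - 2 * i + 1) * fallFac ((n : ℝ) - i) (k - 1) *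
        ((k + i - 1).choose (k - 1) : ℝ)) * U ℝ (n - k - 2 * i : ℕ)

theorem scaledIterDerivU_succ (n k : ℕ) : scaledIterDerivU n (k + 1) =
    ∑ i ∈ range ((n - (k + 1)) / 2 + 1),
      C (((n : ℝ) - k - 2 * i) * fallFac ((n : ℝ) - i) k * ((k + i).choose k : ℝ))
        * U ℝ (n - (k + 1) - 2 * i : ℕ) := by
  refine sum_congr rfl fun i _ => ?_
  rw [Nat.add_sub_cancel, show k + 1 + i - 1 = k + i by omega]
  push_cast; ring_nf

theorem derivative_scaledIterDerivU {n k : ℕ} (hk : k + 2 ≤ n) :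
    derivative (scaledIterDerivU n (k + 1)) = (2 : ℝ) • scaledIterDerivU n (k + 2) := by
  set N := (n - k) / 2
  set c : ℕ → ℝ := fun i =>
    ((n : ℝ) - k - 2 * i) * fallFac ((n : ℝ) - i) k * ((k + i).choose k : ℝ)
  set G : ℕ → ℕ → ℝ[X] := fun i l =>
    C (c i) * (2 * ((n : ℝ[X]) - (k + 1) - 2 * l) * U ℝ (n - (k + 2) - 2 * l : ℕ))
  calc derivative (scaledIterDerivU n (k + 1))
      = ∑ i ∈ range ((n - (k + 1)) / 2 + 1), ∑ j ∈ range (N - i), G i (i + j) := by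
        rw [scaledIterDerivU_succ, derivative_sum]
        refine sum_congr rfl fun i hi => ?_
        have hi : 2 * i ≤ n - (k + 1) := by have := mem_range.mp hi; omega
        rw [derivative_C_mul, derivative_U_natCast,
          show (n - (k + 1) - 2 * i + 1) / 2 = N - i by omega, mul_sum]
        refine sum_congr rfl fun j hj => ?_
        rw [show n - (k + 1) - 2 * i - 1 - 2 * j = n - (k + 2) - 2 * (i + j) by omega,
          Nat.cast_sub hi, Nat.cast_sub (by omega : k + 1 ≤ n)]
        simp only [G]
        push_cast
        ring
    _ = ∑ i ∈ range N, ∑ j ∈ range (N - i), G i (i + j) := by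
        refine (sum_subset (range_subset_range.mpr (by omega)) fun i _ hi => ?_).symm
        rw [Nat.sub_eq_zero_of_le (not_lt.mp (mem_range.not.mp hi)), sum_range_zero]
    _ = ∑ l ∈ range N, ∑ i ∈ range (l + 1), G i l := by
        rw [← sum_range_diag_flip]
        refine sum_congr rfl fun l _ => sum_congr rfl fun i hi => ?_
        rw [Nat.add_sub_cancel' (Nat.lt_succ_iff.mp (mem_range.mp hi))]
    _ = (2 : ℝ) • scaledIterDerivU n (k + 2) := by
        rw [scaledIterDerivU_succ, smul_sum, show (n - (k + 1 + 1)) / 2 + 1 = N by omega]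
        refine sum_congr rfl fun l _ => ?_
        rw [← sum_mul, ← map_sum, sum_range_mul_fallFac_mul_choose, smul_eq_C_mul]
        simp only [map_mul, map_sub, map_add, map_one, map_natCast, map_ofNat, Nat.cast_add,
          Nat.cast_one]
        ring

theorem iterate_derivative_U_eq_smul_scaledIterDerivU {n k : ℕ} (hk : 1 ≤ k) (hkn : k ≤ n) :
    derivative^[k] (U ℝ n) = (2 : ℝ) ^ k • scaledIterDerivU n k := by
  induction k, hk using Nat.le_induction with
  | base =>
    rw [Function.iterate_one, derivative_U_natCast, scaledIterDerivU_succ, smul_sum,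
      show (n - (0 + 1)) / 2 + 1 = (n + 1) / 2 by omega]
    refine sum_congr rfl fun i _ => ?_
    simp only [fallFac, prod_range_zero, Nat.choose_zero_right, smul_eq_C_mul, map_mul, map_sub,
      map_natCast, map_ofNat, Nat.cast_zero, Nat.cast_one, mul_one, sub_zero, zero_add, pow_one]
    ring
  | succ k hk ih =>
    obtain ⟨j, rfl⟩ : ∃ j, k = j + 1 := ⟨k - 1, by omega⟩
    rw [Function.iterate_succ_apply', ih (by omega), derivative_smul,
      derivative_scaledIterDerivU hkn, smul_smul, ← pow_succ]

theorem U_eval_zero_eq_cos (n : ℕ) : (U ℝ n).eval 0 = Real.cos (Real.pi * n / 2) := by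
  have h := U_real_cos (Real.pi / 2) n
  rw [Real.cos_pi_div_two, Real.sin_pi_div_two, mul_one] at h
  rw [h, ← Real.cos_sub_pi_div_two]
  congr 1
  push_cast
  ring

theorem chebyshev_U_identity_general (n : ℕ) (x : ℝ) :
    (U ℝ n).eval x
      + ∑ k ∈ Finset.Icc 1 n, ((-1 : ℝ) ^ k / (Nat.factorial k)) *
          ∑ i ∈ Finset.range ((n - k) / 2 + 1),
            ((n : ℝ) - k - 2 * i + 1) * fallFac ((n : ℝ) - i) (k - 1)
              * (Nat.choose (k + i - 1) (k - 1) : ℝ)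
              * (U ℝ ((n - k - 2 * i : ℕ))).eval x * (2 * x) ^ k
    = Real.cos (Real.pi * n / 2) := by
  rw [← U_eval_zero_eq_cos,
    eval_eq_sum_range_iterate_derivative (natDegree_U_natCast ℝ n).le x 0,
    range_eq_Ico, sum_eq_sum_Ico_succ_bot n.add_one_pos, zero_add, Ico_add_one_right_eq_Icc]
  simp only [Function.iterate_zero_apply, Nat.factorial_zero, Nat.cast_one, div_one, pow_zero,
    mul_one]
  congr 1
  refine sum_congr rfl fun k hk => ?_
  obtain ⟨hk1, hkn⟩ := mem_Icc.mp hk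
  rw [iterate_derivative_U_eq_smul_scaledIterDerivU hk1 hkn, eval_smul, scaledIterDerivU,
    eval_finsetSum, smul_eq_mul, mul_sum, mul_sum, sum_div, sum_mul]
  refine sum_congr rfl fun i _ => ?_
  rw [eval_mul, eval_C]
  ring

theorem chebyshev_U_identity (n : ℕ) (hn : 1 ≤ n) (x : ℝ) :
    (U ℝ n).eval x
      + ∑ k ∈ Finset.Icc 1 n, ((-1 : ℝ) ^ k / (Nat.factorial k)) *
          ∑ i ∈ Finset.range ((n - k) / 2 + 1),
            ((n : ℝ) - k - 2 * i + 1) * fallFac ((n : ℝ) - i) (k - 1)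
              * (Nat.choose (k + i - 1) (k - 1) : ℝ)
              * (U ℝ ((n - k - 2 * i : ℕ))).eval x * (2 * x) ^ k
    = Real.cos (Real.pi * n / 2) :=
  chebyshev_U_identity_general n x
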